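/- arXiv:1710.10109 — 3 statements merged into one kernel-verified Lean document; each statement's English description precedes it below -/
import Mathlib

section
/- Let G = ⟨Φ⟩ be an automata group with alphabet A. Then for every g ∈ G, the order of g (as an element of ℕ ∪ {∞}) is the least common multiple, taken over all finite directed paths in the symmetric conjugacy class graph starting at the vertex C(g), of the products of the integer labels along the path; in particular g has infinite order exactly when these products are unbounded. -/
/-!
Common framework: finite state (Mealy) transducers and the automata groups
they generate, acting on infinite sequences.
-/

namespace AutomataPaper

variable {A S : Type*}

/-- The state reached after processing a finite input word, where
`f a s = (s', a')` means: in state `s`, on input letter `a`, the transducer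
moves to state `s'` and outputs the letter `a'`. -/
def run (f : A → S → S × A) : S → List A → S
  | s, [] => s
  | s, a :: w => run f (f a s).1 w

theorem run_append (f : A → S → S × A) (s : S) (u v : List A) :
    run f s (u ++ v) = run f (run f s u) v := by
  induction u generalizing s with
  | nil => rfl
  | cons a u ih => simpa [run] using ih _

/-- The action of the state `s` on infinite sequences over the alphabet. -/
def seqAct (f : A → S → S × A) (s : S) (w : ℕ → A) : ℕ → A := fun n =>
  (f (w n) (run f s (List.ofFn fun i : Fin n => w i))).2

/-- A valid finite-state transducer: for every state, the output-letter map
is a bijection of the alphabet. -/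
def IsFST (f : A → S → S × A) : Prop :=
  ∀ s : S, Function.Bijective fun a => (f a s).2

theorem seqAct_bijective (f : A → S → S × A) (hf : IsFST f) (s : S) :
    Function.Bijective (seqAct f s) := by
  classical
  constructor
  · intro w w' h
    funext n
    induction n using Nat.strong_induction_on with
    | _ n ih =>
      have hfun : (fun i : Fin n => w i) = fun i : Fin n => w' i :=
        funext fun i => ih i i.isLt
      have hn := congrFun h n
      simp only [seqAct, hfun] at hn
      have := (hf (run f s (List.ofFn fun i : Fin n => w' i))).injective
      exact this hn
  · intro v
    let e : S → A ≃ A := fun q => Equiv.ofBijective _ (hf q)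
    let p : ℕ → S := fun n => Nat.rec s (fun m q => (f ((e q).symm (v m)) q).1) n
    let w : ℕ → A := fun n => (e (p n)).symm (v n)
    have hrun : ∀ n : ℕ, run f s (List.ofFn fun i : Fin n => w i) = p n := by
      intro n
      induction n with
      | zero => rfl
      | succ m ih =>
        have hsplit : (List.ofFn fun i : Fin (m + 1) => w i)
            = (List.ofFn fun i : Fin m => w i) ++ [w m] := by
          rw [List.ofFn_succ']
          simp
        rw [hsplit, run_append, ih]
        rfl
    refine ⟨w, ?_⟩
    funext n
    show (f (w n) (run f s (List.ofFn fun i : Fin n => w i))).2 = v n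
    rw [hrun]
    exact (e (p n)).apply_symm_apply (v n)

/-- The permutation of the set of infinite sequences induced by a state. -/
noncomputable def statePerm (f : A → S → S × A) (hf : IsFST f) (s : S) :
    Equiv.Perm (ℕ → A) :=
  Equiv.ofBijective (seqAct f s) (seqAct_bijective f hf s)

/-- The automata group generated by a finite state transducer: the subgroup of
the permutation group of `A^∞` generated by the actions of the states. -/
noncomputable def autGroup (f : A → S → S × A) (hf : IsFST f) :
    Subgroup (Equiv.Perm (ℕ → A)) :=
  Subgroup.closure (Set.range (statePerm f hf))

/-- Prepending a letter to an infinite sequence. -/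
def scons (a : A) (v : ℕ → A) : ℕ → A := fun n =>
  match n with
  | 0 => a
  | n + 1 => v n

/-- Prepending a finite word to an infinite sequence. -/
def lappend (u : List A) (v : ℕ → A) : ℕ → A := fun n =>
  if h : n < u.length then u.get ⟨n, h⟩ else v (n - u.length)

/-- `IsStateSeq g h u` says that `h` is the state (section) `g@u` of `g` at the
finite word `u`: `g` maps sequences starting with `u` to sequences starting with
a fixed word `u'` of the same length, acting as `h` on the tail. -/
def IsStateSeq (g h : Equiv.Perm (ℕ → A)) (u : List A) : Prop :=
  ∃ u' : List A, u'.length = u.length ∧ ∀ v : ℕ → A, g (lappend u v) = lappend u' (h v)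

end AutomataPaper

namespace AutomataPaper

variable {A : Type*}

/-- The induced action of an element of an automata group on the first letter
of a sequence (for elements of an automata group, the first output letter
depends only on the first input letter, so evaluating on the constant ray
computes it). -/
def firstLetter (g : Equiv.Perm (ℕ → A)) : A → A := fun a => g (fun _ => a) 0

/-- `PathProd G g m` holds iff there is a finite directed path in the symmetric
conjugacy class graph starting at the vertex `C(g)` along which the labels
multiply to `m`.  Edges out of `C(g)` are computed from any representative
`g' ∈ C(g) = {x⁻¹ g^{±1} x | x ∈ G}`: for each `⟨g'⟩`-orbit on the alphabet,
with representative `a` and size `n` (the minimal period of `a` under the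
first-letter action of `g'`), there is an edge labelled `n` to the class
`C(h)` of the state `h = (g'^n)@a`, characterised by
`(g'^n)(a·v) = a·(h v)` for all tails `v`. -/
inductive PathProd (G : Subgroup (Equiv.Perm (ℕ → A))) :
    Equiv.Perm (ℕ → A) → ℕ → Prop
  | nil (g : Equiv.Perm (ℕ → A)) : PathProd G g 1
  | step (g g' h : Equiv.Perm (ℕ → A)) (n m : ℕ)
      (hrep : ∃ x ∈ G, g' = x⁻¹ * g * x ∨ g' = x⁻¹ * g⁻¹ * x)
      (hedge : ∃ a : A, n = Function.minimalPeriod (firstLetter g') a ∧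
        ∀ v : ℕ → A, (g' ^ n) (scons a v) = scons a (h v))
      (htail : PathProd G h m) : PathProd G g (n * m)

/-!
A power `g ^ e` is trivial iff it fixes every letter of every sequence. On first letters `g`
acts as a permutation; if the orbit of `a` has length `n`, then `g ^ e` fixes `a` iff `n ∣ e`,
and in that case it acts below `a` as `h ^ (e / n)`, where `h = (g ^ n)@a` is the target of the
edge of the class graph through `a`. Descending level by level, `g ^ e = 1` iff every path
product from `g` divides `e`. Since path products are positive, a bound `B` on them yields the
common multiple `B!`, so infinite order means exactly unbounded path products.
-/

section SelfSimilar

open Function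

variable {G : Subgroup (Equiv.Perm (ℕ → A))} {g h : Equiv.Perm (ℕ → A)} {a b : A}

theorem scons_head_tail (w : ℕ → A) : scons (w 0) (fun n => w (n + 1)) = w := by
  funext n; cases n <;> rfl

theorem scons_inj {v w : ℕ → A} : scons a v = scons b w ↔ a = b ∧ v = w :=
  ⟨fun h => ⟨congrFun h 0, funext fun n => congrFun h (n + 1)⟩,
    by rintro ⟨rfl, rfl⟩; rfl⟩

theorem pow_apply_scons_of_apply_scons (hs : ∀ v, g (scons a v) = scons a (h v)) (t : ℕ)
    (v : ℕ → A) : (g ^ t) (scons a v) = scons a ((h ^ t) v) := by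
  induction t generalizing v with
  | zero => rfl
  | succ t ih => rw [pow_succ, Equiv.Perm.mul_apply, hs, ih, pow_succ, Equiv.Perm.mul_apply]

theorem firstLetter_eq_of_apply_scons (hs : ∀ v, g (scons a v) = scons b (h v)) :
    firstLetter g a = b := by
  have hconst : (fun _ : ℕ => a) = scons a fun _ => a := by funext n; cases n <;> rfl
  rw [firstLetter, hconst, hs]
  rfl

def HasSectionsIn (G : Subgroup (Equiv.Perm (ℕ → A))) (g : Equiv.Perm (ℕ → A)) : Prop :=
  ∃ σ : Equiv.Perm A, ∀ a, ∃ h ∈ G, ∀ v, g (scons a v) = scons (σ a) (h v)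

theorem hasSectionsIn_one : HasSectionsIn G 1 :=
  ⟨1, fun _ => ⟨1, G.one_mem, fun _ => rfl⟩⟩

theorem HasSectionsIn.mul {g₁ g₂ : Equiv.Perm (ℕ → A)} (h₁ : HasSectionsIn G g₁)
    (h₂ : HasSectionsIn G g₂) : HasSectionsIn G (g₁ * g₂) := by
  obtain ⟨σ₁, hσ₁⟩ := h₁
  obtain ⟨σ₂, hσ₂⟩ := h₂
  refine ⟨σ₁ * σ₂, fun a => ?_⟩
  obtain ⟨k₂, hk₂, hs₂⟩ := hσ₂ a
  obtain ⟨k₁, hk₁, hs₁⟩ := hσ₁ (σ₂ a)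
  refine ⟨k₁ * k₂, G.mul_mem hk₁ hk₂, fun v => ?_⟩
  simp only [Equiv.Perm.mul_apply, hs₂, hs₁]

theorem HasSectionsIn.inv (hg : HasSectionsIn G g) : HasSectionsIn G g⁻¹ := by
  obtain ⟨σ, hσ⟩ := hg
  refine ⟨σ⁻¹, fun a => ?_⟩
  obtain ⟨k, hk, hs⟩ := hσ (σ⁻¹ a)
  refine ⟨k⁻¹, G.inv_mem hk, fun v => Equiv.Perm.inv_eq_iff_eq.mpr ?_⟩
  rw [hs]
  simp only [Equiv.Perm.coe_inv, Equiv.apply_symm_apply]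

def IsSelfSimilar (G : Subgroup (Equiv.Perm (ℕ → A))) : Prop :=
  ∀ g ∈ G, HasSectionsIn G g

namespace IsSelfSimilar

variable (hG : IsSelfSimilar G)
include hG

theorem exists_section (hg : g ∈ G) (a : A) :
    ∃ h ∈ G, ∀ v, g (scons a v) = scons (firstLetter g a) (h v) := by
  obtain ⟨σ, hσ⟩ := hG g hg
  obtain ⟨h, hh, hs⟩ := hσ a
  exact ⟨h, hh, by rwa [firstLetter_eq_of_apply_scons hs]⟩

theorem apply_zero (hg : g ∈ G) (w : ℕ → A) : g w 0 = firstLetter g (w 0) := by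
  obtain ⟨h, -, hs⟩ := hG.exists_section hg (w 0)
  rw [← scons_head_tail w, hs]
  rfl

theorem firstLetter_pow (hg : g ∈ G) (k : ℕ) : firstLetter (g ^ k) = (firstLetter g)^[k] := by
  induction k with
  | zero => rfl
  | succ k ih =>
    funext a
    rw [iterate_succ_apply', ← congrFun ih, firstLetter, pow_succ',
      Equiv.Perm.mul_apply, hG.apply_zero hg]
    rfl

theorem firstLetter_injective (hg : g ∈ G) : Injective (firstLetter g) := by
  obtain ⟨σ, hσ⟩ := hG g hg
  have hfirst : firstLetter g = σ := funext fun a => by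
    obtain ⟨h, -, hs⟩ := hσ a
    exact firstLetter_eq_of_apply_scons hs
  exact hfirst ▸ σ.injective

theorem mem_of_apply_scons (hg : g ∈ G) (hs : ∀ v, g (scons a v) = scons b (h v)) :
    h ∈ G := by
  obtain ⟨h₀, hh₀, hs₀⟩ := hG.exists_section hg a
  have : h = h₀ := Equiv.ext fun v => (scons_inj.mp ((hs v).symm.trans (hs₀ v))).2
  exact this ▸ hh₀

theorem exists_section_pow_minimalPeriod (hg : g ∈ G) (a : A) :
    ∃ h ∈ G, ∀ v, (g ^ minimalPeriod (firstLetter g) a) (scons a v) = scons a (h v) := by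
  obtain ⟨h, hh, hs⟩ := hG.exists_section (G.pow_mem hg (minimalPeriod _ a)) a
  rw [hG.firstLetter_pow hg, iterate_minimalPeriod] at hs
  exact ⟨h, hh, hs⟩

theorem minimalPeriod_mul_orderOf_dvd (hg : g ∈ G)
    (hs : ∀ v, (g ^ minimalPeriod (firstLetter g) a) (scons a v) = scons a (h v)) :
    minimalPeriod (firstLetter g) a * orderOf h ∣ orderOf g := by
  rcases eq_or_ne (orderOf g) 0 with h0 | h0
  · rw [h0]; exact dvd_zero _
  have hperiodic : IsPeriodicPt (firstLetter g) (orderOf g) a := by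
    rw [IsPeriodicPt, IsFixedPt, ← hG.firstLetter_pow hg, pow_orderOf_eq_one]
    rfl
  obtain ⟨t, ht⟩ := hperiodic.minimalPeriod_dvd
  have hht : h ^ t = 1 := Equiv.ext fun v => by
    have := pow_apply_scons_of_apply_scons hs t v
    rw [← pow_mul, ← ht, pow_orderOf_eq_one] at this
    exact (scons_inj.mp this.symm).2
  rw [ht]
  exact mul_dvd_mul_left _ (orderOf_dvd_of_pow_eq_one hht)

end IsSelfSimilar

end SelfSimilar

theorem statePerm_apply_scons {S : Type*} (f : A → S → S × A) (hf : IsFST f) (s : S) (a : A)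
    (v : ℕ → A) :
    statePerm f hf s (scons a v) = scons (f a s).2 (statePerm f hf (f a s).1 v) := by
  funext n
  cases n with
  | zero => rfl
  | succ n =>
    show (f (v n) (run f s (List.ofFn fun i : Fin (n + 1) => scons a v i))).2 = _
    rw [List.ofFn_succ]
    rfl

theorem autGroup_isSelfSimilar {S : Type*} (f : A → S → S × A) (hf : IsFST f) :
    IsSelfSimilar (autGroup f hf) := by
  intro g hg
  induction hg using Subgroup.closure_induction with
  | mem _ hx =>
    obtain ⟨s, rfl⟩ := hx
    exact ⟨Equiv.ofBijective _ (hf s), fun a => ⟨statePerm f hf (f a s).1,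
      Subgroup.subset_closure ⟨_, rfl⟩, statePerm_apply_scons f hf s a⟩⟩
  | one => exact hasSectionsIn_one
  | mul _ _ _ _ ih₁ ih₂ => exact ih₁.mul ih₂
  | inv _ _ ih => exact ih.inv

section PathProducts

open Function

variable {G : Subgroup (Equiv.Perm (ℕ → A))} {g h : Equiv.Perm (ℕ → A)} {a : A} {m e : ℕ}

theorem orderOf_eq_of_conj_or_conj_inv {H : Type*} [Group H] {x y z : H}
    (hconj : y = z⁻¹ * x * z ∨ y = z⁻¹ * x⁻¹ * z) : orderOf y = orderOf x := by
  rcases hconj with rfl | rfl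
  · exact (SemiconjBy.orderOf_eq z⁻¹ (by simp [SemiconjBy, mul_assoc])).symm
  · rw [← orderOf_inv x]
    exact (SemiconjBy.orderOf_eq z⁻¹ (by simp [SemiconjBy, mul_assoc])).symm

theorem mem_of_conj_or_conj_inv {x y z : Equiv.Perm (ℕ → A)} (hx : x ∈ G) (hz : z ∈ G)
    (hconj : y = z⁻¹ * x * z ∨ y = z⁻¹ * x⁻¹ * z) : y ∈ G := by
  rcases hconj with rfl | rfl
  · exact G.mul_mem (G.mul_mem (G.inv_mem hz) hx) hz
  · exact G.mul_mem (G.mul_mem (G.inv_mem hz) (G.inv_mem hx)) hz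

theorem PathProd.cons_section
    (hs : ∀ v, (g ^ minimalPeriod (firstLetter g) a) (scons a v) = scons a (h v))
    (hm : PathProd G h m) : PathProd G g (minimalPeriod (firstLetter g) a * m) :=
  .step g g h _ m ⟨1, G.one_mem, .inl (by group)⟩ ⟨a, rfl, hs⟩ hm

theorem PathProd.dvd_orderOf (hG : IsSelfSimilar G) (hp : PathProd G g m) (hg : g ∈ G) :
    m ∣ orderOf g := by
  induction hp with
  | nil => exact one_dvd _
  | step g g' h n m hrep hedge _ ih =>
    obtain ⟨x, hx, hconj⟩ := hrep
    obtain ⟨a, rfl, hs⟩ := hedge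
    have hg' := mem_of_conj_or_conj_inv hg hx hconj
    rw [← orderOf_eq_of_conj_or_conj_inv hconj]
    exact (mul_dvd_mul_left _ (ih (hG.mem_of_apply_scons (G.pow_mem hg' _) hs))).trans
      (hG.minimalPeriod_mul_orderOf_dvd hg' hs)

theorem PathProd.pos [Finite A] (hG : IsSelfSimilar G) (hp : PathProd G g m) (hg : g ∈ G) :
    0 < m := by
  induction hp with
  | nil => exact one_pos
  | step g g' h n m hrep hedge _ ih =>
    obtain ⟨x, hx, hconj⟩ := hrep
    obtain ⟨a, rfl, hs⟩ := hedge
    have hg' := mem_of_conj_or_conj_inv hg hx hconj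
    exact Nat.mul_pos
      (minimalPeriod_pos_of_mem_periodicPts
        ((hG.firstLetter_injective hg').mem_periodicPts a))
      (ih (hG.mem_of_apply_scons (G.pow_mem hg' _) hs))

theorem exists_pow_apply_scons_of_forall_pathProd_dvd (hG : IsSelfSimilar G) (hg : g ∈ G)
    (he : ∀ m, PathProd G g m → m ∣ e) (a : A) :
    ∃ h ∈ G, ∃ t, (∀ m, PathProd G h m → m ∣ t) ∧
      ∀ v, (g ^ e) (scons a v) = scons a ((h ^ t) v) := by
  rcases eq_or_ne e 0 with rfl | he0
  · exact ⟨1, G.one_mem, 0, fun _ _ => dvd_zero _, fun _ => rfl⟩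
  obtain ⟨h, hh, hs⟩ := hG.exists_section_pow_minimalPeriod hg a
  obtain ⟨t, ht⟩ : minimalPeriod (firstLetter g) a ∣ e := by
    simpa using he _ ((PathProd.nil h).cons_section hs)
  have hn0 : minimalPeriod (firstLetter g) a ≠ 0 := left_ne_zero_of_mul (ht ▸ he0)
  refine ⟨h, hh, t, fun m hm => ?_, fun v => ?_⟩
  · exact (Nat.mul_dvd_mul_iff_left (Nat.pos_of_ne_zero hn0)).mp (ht ▸ he _ (hm.cons_section hs))
  · rw [ht, pow_mul]
    exact pow_apply_scons_of_apply_scons hs t v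

theorem pow_eq_one_of_forall_pathProd_dvd (hG : IsSelfSimilar G) (hg : g ∈ G)
    (he : ∀ m, PathProd G g m → m ∣ e) : g ^ e = 1 := by
  suffices ∀ i, ∀ g ∈ G, ∀ e, (∀ m, PathProd G g m → m ∣ e) →
      ∀ w, (g ^ e) w i = w i by
    exact Equiv.ext fun w => funext fun i => this i g hg e he w
  intro i
  induction i with
  | zero =>
    intro g hg e he w
    obtain ⟨h, -, t, -, hs⟩ := exists_pow_apply_scons_of_forall_pathProd_dvd hG hg he (w 0)
    rw [← scons_head_tail w, hs]
    rfl
  | succ i ih =>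
    intro g hg e he w
    obtain ⟨h, hh, t, ht, hs⟩ := exists_pow_apply_scons_of_forall_pathProd_dvd hG hg he (w 0)
    rw [← scons_head_tail w, hs]
    exact ih h hh t ht _

end PathProducts

theorem order_eq_lcm_of_path_products_general {A S : Type*} [Fintype A]
    (f : A → S → S × A) (hb : IsFST f)
    (g : Equiv.Perm (ℕ → A)) (hg : g ∈ autGroup f hb) :
    (∀ m : ℕ, PathProd (autGroup f hb) g m → m ∣ orderOf g) ∧
    (∀ d : ℕ, (∀ m : ℕ, PathProd (autGroup f hb) g m → m ∣ d) → orderOf g ∣ d) ∧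
    (orderOf g = 0 ↔ ¬ BddAbove {m : ℕ | PathProd (autGroup f hb) g m}) := by
  have hG := autGroup_isSelfSimilar f hb
  have hdvd (m : ℕ) (hm : PathProd (autGroup f hb) g m) : m ∣ orderOf g := hm.dvd_orderOf hG hg
  have hlcm (d : ℕ) (hd : ∀ m, PathProd (autGroup f hb) g m → m ∣ d) : orderOf g ∣ d :=
    orderOf_dvd_of_pow_eq_one (pow_eq_one_of_forall_pathProd_dvd hG hg hd)
  refine ⟨hdvd, hlcm, fun h0 ⟨B, hB⟩ => ?_, fun hunbdd => ?_⟩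
  · have := hlcm B.factorial fun m hm => Nat.dvd_factorial (hm.pos hG hg) (hB hm)
    exact B.factorial_ne_zero (Nat.eq_zero_of_zero_dvd (h0 ▸ this))
  · by_contra h0
    exact hunbdd ⟨orderOf g, fun m hm => Nat.le_of_dvd (Nat.pos_of_ne_zero h0) (hdvd m hm)⟩

/-- **The order lemma.**  Let `G = ⟨Φ⟩` be an automata group over a finite
alphabet.  For every `g ∈ G`, the order of `g` — as an element of `ℕ ∪ {∞}`,
encoded by `orderOf` with the convention `orderOf g = 0` for infinite order —
is the least common multiple, over all finite directed paths in the symmetric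
conjugacy class graph starting at `C(g)`, of the products of labels along the
path: it is a common multiple of all such products and divides every common
multiple.  In particular `g` has infinite order exactly when these products
are unbounded. -/
theorem order_eq_lcm_of_path_products {A S : Type*} [Fintype A] [Fintype S]
    (f : A → S → S × A) (hb : IsFST f)
    (g : Equiv.Perm (ℕ → A)) (hg : g ∈ autGroup f hb) :
    (∀ m : ℕ, PathProd (autGroup f hb) g m → m ∣ orderOf g) ∧
    (∀ d : ℕ, (∀ m : ℕ, PathProd (autGroup f hb) g m → m ∣ d) → orderOf g ∣ d) ∧
    (orderOf g = 0 ↔ ¬ BddAbove {m : ℕ | PathProd (autGroup f hb) g m}) :=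
  order_eq_lcm_of_path_products_general f hb g hg

end AutomataPaper
end

section
/- Let Φ : A × S → (S ∪ {ε}) × A be a transducer whose output at each transition is either a single state or the empty word ε, with S closed under an inversion making the actions of s and s^{-1} mutually inverse. If there is a constant N ∈ ℕ such that every path of length at least N in the dual Moore diagram of Φ whose input label is a reduced word contains at least one ε letter among its output labels, then the group ⟨Φ⟩ is contracting; in fact for every g ∈ ⟨Φ⟩ and every a ∈ A the state g@a satisfies |g@a| ≤ (1 − 1/N)|g| + 1 in the word metric of ⟨Φ⟩ with respect to S. -/
namespace AutomataPaper

variable {A S : Type*}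

/-- The (length-preserving) action on finite words of a state of a transducer
whose outputs are single states or the empty word `ε` (represented by `none`);
the state `none` acts trivially. -/
def listActO (f : A → S → Option S × A) : Option S → List A → List A
  | _, [] => []
  | none, a :: w => a :: listActO f none w
  | some s, a :: w => (f a s).2 :: listActO f (f a s).1 w

/-- The output labels (elements of `S ∪ {ε}`) along the unique path in the
dual Moore diagram of `f` starting at the vertex `a` with input label `wds`. -/
def pathOut (f : A → S → Option S × A) : A → List S → List (Option S)
  | _, [] => []
  | a, s :: rest => (f a s).1 :: pathOut f (f a s).2 rest

/-- The permutation of finite words induced by the state `s`, whose inverse is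
induced by the state `inv s`. -/
def epsPerm (f : A → S → Option S × A) (inv : S → S)
    (h₁ : ∀ (s : S) (w : List A), listActO f (some (inv s)) (listActO f (some s) w) = w)
    (h₂ : ∀ (s : S) (w : List A), listActO f (some s) (listActO f (some (inv s)) w) = w)
    (s : S) : Equiv.Perm (List A) :=
  ⟨listActO f (some s), listActO f (some (inv s)), h₁ s, h₂ s⟩

/-- `IsStateL g h u` says that `h` is the state (section) `g@u` of `g` at the
finite word `u`: `g` maps words starting with `u` to words starting with a
fixed word `u'` of the same length, acting as `h` on the remainder. -/
def IsStateL (g h : Equiv.Perm (List A)) (u : List A) : Prop :=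
  ∃ u' : List A, u'.length = u.length ∧ ∀ v : List A, g (u ++ v) = u' ++ h v

theorem listActO_none (f : A → S → Option S × A) (w : List A) : listActO f none w = w := by
  induction w with
  | nil => rfl
  | cons a w ih => simp [listActO, ih]

def outLetter (f : A → S → Option S × A) : List S → A → A
  | [], a => a
  | s :: w, a => (f (outLetter f w a) s).2

def stateList (f : A → S → Option S × A) : List S → A → List (Option S)
  | [], _ => []
  | s :: w, a => (f (outLetter f w a) s).1 :: stateList f w a

def pathEnd (f : A → S → Option S × A) : A → List S → A
  | a, [] => a
  | a, s :: w => pathEnd f (f a s).2 w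

def countNone : List (Option S) → ℕ
  | [] => 0
  | none :: l => countNone l + 1
  | some _ :: l => countNone l

theorem countNone_append (l₁ l₂ : List (Option S)) :
    countNone (l₁ ++ l₂) = countNone l₁ + countNone l₂ := by
  induction l₁ with
  | nil => simp [countNone]
  | cons o l ih => cases o <;> simp [countNone, ih] <;> omega

theorem countNone_reverse (l : List (Option S)) :
    countNone l.reverse = countNone l := by
  induction l with
  | nil => rfl
  | cons o l ih =>
    cases o <;> simp [countNone, List.reverse_cons, countNone_append, ih, countNone]

theorem one_le_countNone {l : List (Option S)} (h : none ∈ l) : 1 ≤ countNone l := by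
  induction l with
  | nil => simp at h
  | cons o l ih =>
    cases o with
    | none => simp [countNone]
    | some s =>
      simp only [List.mem_cons] at h
      rcases h with h | h
      · exact absurd h (by simp)
      · simpa [countNone] using ih h

section Aux

variable (f : A → S → Option S × A) (inv : S → S)
variable (h₁ : ∀ (s : S) (w : List A), listActO f (some (inv s)) (listActO f (some s) w) = w)
variable (h₂ : ∀ (s : S) (w : List A), listActO f (some s) (listActO f (some (inv s)) w) = w)

def optPerm (o : Option S) : Equiv.Perm (List A) :=
  o.elim 1 (epsPerm f inv h₁ h₂)

theorem optPerm_apply (o : Option S) (v : List A) :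
    optPerm f inv h₁ h₂ o v = listActO f o v := by
  cases o with
  | none => simp [optPerm, listActO_none]
  | some t => rfl

theorem epsPerm_cons (s : S) (a : A) (v : List A) :
    epsPerm f inv h₁ h₂ s (a :: v) = (f a s).2 :: optPerm f inv h₁ h₂ (f a s).1 v := by
  rw [optPerm_apply]; rfl

theorem epsPerm_inv (s : S) :
    epsPerm f inv h₁ h₂ (inv s) = (epsPerm f inv h₁ h₂ s)⁻¹ :=
  Equiv.ext fun _ => rfl

theorem epsPerm_inv_mul (s : S) :
    epsPerm f inv h₁ h₂ (inv s) * epsPerm f inv h₁ h₂ s = 1 := by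
  rw [epsPerm_inv, inv_mul_cancel]

theorem pathOut_append (a : A) (u v : List S) :
    pathOut f a (u ++ v) = pathOut f a u ++ pathOut f (pathEnd f a u) v := by
  induction u generalizing a with
  | nil => rfl
  | cons s u ih => simp [pathOut, pathEnd, ih]

theorem pathEnd_append (a : A) (u v : List S) :
    pathEnd f a (u ++ v) = pathEnd f (pathEnd f a u) v := by
  induction u generalizing a with
  | nil => rfl
  | cons s u ih => simp [pathEnd, ih]

theorem outLetter_eq (w : List S) (a : A) :
    outLetter f w a = pathEnd f a w.reverse := by
  induction w with
  | nil => rfl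
  | cons s w ih => simp [outLetter, List.reverse_cons, pathEnd_append, ih, pathEnd]

theorem stateList_eq (w : List S) (a : A) :
    stateList f w a = (pathOut f a w.reverse).reverse := by
  induction w with
  | nil => rfl
  | cons s w ih =>
    simp [stateList, List.reverse_cons, pathOut_append, ih, pathOut, outLetter_eq]

theorem length_stateList (w : List S) (a : A) :
    (stateList f w a).length = w.length := by
  induction w with
  | nil => rfl
  | cons s w ih => simp [stateList, ih]

theorem prod_map_eps_cons (w : List S) (a : A) (v : List A) :
    ((w.map (epsPerm f inv h₁ h₂)).prod) (a :: v)
      = outLetter f w a :: ((stateList f w a).map (optPerm f inv h₁ h₂)).prod v := by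
  induction w with
  | nil => simp [outLetter, stateList]
  | cons s w ih =>
    simp only [List.map_cons, List.prod_cons, Equiv.Perm.mul_apply, ih, epsPerm_cons,
      outLetter, stateList]

theorem isStateL_prod (w : List S) (a : A) :
    IsStateL ((w.map (epsPerm f inv h₁ h₂)).prod)
      (((stateList f w a).map (optPerm f inv h₁ h₂)).prod) [a] :=
  ⟨[outLetter f w a], rfl, fun v => prod_map_eps_cons f inv h₁ h₂ w a v⟩

end Aux

theorem IsStateL.unique {g h h' : Equiv.Perm (List A)} {u : List A}
    (H : IsStateL g h u) (H' : IsStateL g h' u) : h = h' := by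
  obtain ⟨u₁, hl₁, he₁⟩ := H
  obtain ⟨u₂, hl₂, he₂⟩ := H'
  apply Equiv.ext; intro v
  have heq := (he₁ v).symm.trans (he₂ v)
  have hlen : u₁.length = u₂.length := hl₁.trans hl₂.symm
  have := congrArg (List.drop u₁.length) heq
  rwa [List.drop_left, hlen, List.drop_left] at this


section Main

variable (f : A → S → Option S × A) (inv : S → S)
variable (h₁ : ∀ (s : S) (w : List A), listActO f (some (inv s)) (listActO f (some s) w) = w)
variable (h₂ : ∀ (s : S) (w : List A), listActO f (some s) (listActO f (some (inv s)) w) = w)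
variable (N : ℕ)
variable (hN : ∀ (a : A) (wds : List S), List.Chain' (fun s t => t ≠ inv s) wds →
      N ≤ wds.length → none ∈ pathOut f a wds)

include hN in
theorem count_pathOut :
    ∀ (n : ℕ) (wds : List S), wds.length = n → ∀ a : A,
      List.Chain' (fun s t => t ≠ inv s) wds →
      n / N ≤ countNone (pathOut f a wds) := by
  intro n
  induction n using Nat.strong_induction_on with
  | _ n ih =>
    intro wds hlen a hch
    rcases Nat.eq_zero_or_pos N with hN0 | hNpos
    · subst hN0
      exact absurd (hN a [] List.isChain_nil (Nat.le_refl 0)) (by simp [pathOut])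
    rcases lt_or_ge n N with hlt | hle
    · simp [Nat.div_eq_of_lt hlt]
    · have hsplit := List.take_append_drop N wds
      have hch' : List.Chain' (fun s t => t ≠ inv s) (wds.take N) ∧
          List.Chain' (fun s t => t ≠ inv s) (wds.drop N) := by
        rw [← hsplit] at hch
        exact ⟨(List.isChain_append.mp hch).1, (List.isChain_append.mp hch).2.1⟩
      have htk : (wds.take N).length = N := by rw [List.length_take]; omega
      have h1 : none ∈ pathOut f a (wds.take N) := hN a _ hch'.1 (le_of_eq htk.symm)
      have hc1 : 1 ≤ countNone (pathOut f a (wds.take N)) := one_le_countNone h1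
      have hrec := ih (n - N) (by omega) (wds.drop N) (by rw [List.length_drop]; omega)
        (pathEnd f a (wds.take N)) hch'.2
      have hkey : pathOut f a wds
          = pathOut f a (wds.take N) ++ pathOut f (pathEnd f a (wds.take N)) (wds.drop N) := by
        conv_lhs => rw [← hsplit]
        rw [pathOut_append]
      have hdiv : n / N = (n - N) / N + 1 := Nat.div_eq_sub_div hNpos hle
      rw [hkey, countNone_append]
      omega

theorem exists_word_of_optList (l : List (Option S)) :
    ∃ w : List S, (w.map (epsPerm f inv h₁ h₂)).prod = (l.map (optPerm f inv h₁ h₂)).prod ∧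
      w.length + countNone l = l.length := by
  induction l with
  | nil => exact ⟨[], by simp, by simp [countNone]⟩
  | cons o l ih =>
    obtain ⟨w, hw, hl⟩ := ih
    cases o with
    | none =>
      exact ⟨w, by simp [optPerm, hw], by simp [countNone]; omega⟩
    | some s =>
      exact ⟨s :: w, by simp [optPerm, hw], by simp [countNone]; omega⟩

theorem exists_reduced :
    ∀ (n : ℕ) (w : List S), w.length ≤ n →
    ∃ w' : List S, List.Chain' (fun x y => x ≠ inv y) w' ∧ w'.length ≤ w.length ∧
      (w'.map (epsPerm f inv h₁ h₂)).prod = (w.map (epsPerm f inv h₁ h₂)).prod := by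
  intro n
  induction n with
  | zero =>
    intro w hw
    have : w = [] := List.length_eq_zero_iff.mp (Nat.le_zero.mp hw)
    subst this
    exact ⟨[], List.isChain_nil, le_rfl, rfl⟩
  | succ n ih =>
    intro w hw
    match w with
    | [] => exact ⟨[], List.isChain_nil, le_rfl, rfl⟩
    | [s] => exact ⟨[s], List.isChain_singleton s, le_rfl, rfl⟩
    | s :: t :: r =>
      have hlen : (t :: r).length ≤ n := by simp at hw ⊢; omega
      obtain ⟨w₁, hc₁, hl₁, hp₁⟩ := ih (t :: r) hlen
      cases w₁ with
      | nil =>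
        refine ⟨[s], List.isChain_singleton s, by simp, ?_⟩
        simp only [List.map_cons, List.prod_cons, List.map_nil, List.prod_nil] at hp₁ ⊢
        rw [← hp₁, mul_one]
      | cons u w₂ =>
        by_cases hsu : s = inv u
        · have hw₂ : w₂.length ≤ n := by
            simp at hl₁ hlen; omega
          obtain ⟨w₃, hc₃, hl₃, hp₃⟩ := ih w₂ hw₂
          refine ⟨w₃, hc₃, by simp at hl₁ ⊢; omega, ?_⟩
          have hp₁' : epsPerm f inv h₁ h₂ u * (w₂.map (epsPerm f inv h₁ h₂)).prod
              = ((t :: r).map (epsPerm f inv h₁ h₂)).prod := by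
            simpa using hp₁
          calc (w₃.map (epsPerm f inv h₁ h₂)).prod
              = (w₂.map (epsPerm f inv h₁ h₂)).prod := hp₃
            _ = (epsPerm f inv h₁ h₂ (inv u) * epsPerm f inv h₁ h₂ u)
                  * (w₂.map (epsPerm f inv h₁ h₂)).prod := by
                rw [epsPerm_inv_mul, one_mul]
            _ = epsPerm f inv h₁ h₂ s *
                  (epsPerm f inv h₁ h₂ u * (w₂.map (epsPerm f inv h₁ h₂)).prod) := by
                rw [hsu, mul_assoc]
            _ = ((s :: t :: r).map (epsPerm f inv h₁ h₂)).prod := by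
                rw [hp₁']; simp
        · refine ⟨s :: u :: w₂, List.isChain_cons_cons.mpr ⟨hsu, hc₁⟩, by simp at hl₁ ⊢; omega, ?_⟩
          simp only [List.map_cons, List.prod_cons] at hp₁ ⊢
          rw [hp₁]

include hN in
theorem step_lemma {w : List S} (hch : List.Chain' (fun x y => x ≠ inv y) w) (a : A)
    {h : Equiv.Perm (List A)}
    (H : IsStateL ((w.map (epsPerm f inv h₁ h₂)).prod) h [a]) :
    ∃ w'' : List S, (w''.map (epsPerm f inv h₁ h₂)).prod = h ∧
      w''.length ≤ w.length - w.length / N := by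
  have h' := isStateL_prod f inv h₁ h₂ w a
  have heq : h = ((stateList f w a).map (optPerm f inv h₁ h₂)).prod := H.unique h'
  obtain ⟨w'', hp, hl⟩ := exists_word_of_optList f inv h₁ h₂ (stateList f w a)
  have hcount : w.length / N ≤ countNone (stateList f w a) := by
    rw [stateList_eq, countNone_reverse]
    exact count_pathOut f inv N hN w.length w.reverse (by simp) a
      (List.isChain_reverse.mpr hch)
  have hlen := length_stateList f w a
  exact ⟨w'', hp.trans heq.symm, by omega⟩

theorem split_lemma (w : List S) (a : A) (u : List A) (h : Equiv.Perm (List A))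
    (H : IsStateL ((w.map (epsPerm f inv h₁ h₂)).prod) h (a :: u)) :
    ∃ h' : Equiv.Perm (List A),
      IsStateL ((w.map (epsPerm f inv h₁ h₂)).prod) h' [a] ∧ IsStateL h' h u := by
  refine ⟨((stateList f w a).map (optPerm f inv h₁ h₂)).prod,
    isStateL_prod f inv h₁ h₂ w a, ?_⟩
  obtain ⟨u', hlen, he⟩ := H
  cases u' with
  | nil => simp at hlen
  | cons b u'' =>
    refine ⟨u'', by simpa using hlen, fun v => ?_⟩
    have hv := he v
    rw [List.cons_append, prod_map_eps_cons] at hv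
    simp only [List.cons_append] at hv
    exact (List.cons_eq_cons.mp hv).2

include hN in
theorem claim_lemma :
    ∀ (u : List A) (w : List S) (h : Equiv.Perm (List A)),
      IsStateL ((w.map (epsPerm f inv h₁ h₂)).prod) h u →
      ∃ w' : List S, (w'.map (epsPerm f inv h₁ h₂)).prod = h ∧
        w'.length ≤ max (w.length - u.length) (N - 1) := by
  intro u
  induction u with
  | nil =>
    intro w h H
    have hg : h = (w.map (epsPerm f inv h₁ h₂)).prod := by
      obtain ⟨u', hl, he⟩ := H
      have hu' : u' = [] := List.length_eq_zero_iff.mp (by simpa using hl)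
      subst hu'
      apply Equiv.ext
      intro v
      simpa using (he v).symm
    exact ⟨w, hg.symm, le_max_of_le_left (by simp)⟩
  | cons a u ih =>
    intro w h H
    rcases Nat.eq_zero_or_pos N with h0 | hNpos
    · subst h0
      exact absurd (hN a [] List.isChain_nil (Nat.le_refl 0)) (by simp [pathOut])
    obtain ⟨w₀, hc₀, hl₀, hp₀⟩ := exists_reduced f inv h₁ h₂ w.length w le_rfl
    rw [← hp₀] at H
    obtain ⟨h', H1, H2⟩ := split_lemma f inv h₁ h₂ w₀ a u h H
    obtain ⟨w₁, hp₁, hl₁⟩ := step_lemma f inv h₁ h₂ N hN hc₀ a H1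
    rw [← hp₁] at H2
    obtain ⟨w', hp', hl'⟩ := ih w₁ h H2
    refine ⟨w', hp', ?_⟩
    simp only [List.length_cons]
    rcases lt_or_ge w₀.length N with hx | hx
    · have hd : w₀.length / N = 0 := Nat.div_eq_of_lt hx
      omega
    · have hd : 1 ≤ w₀.length / N := (Nat.one_le_div_iff hNpos).mpr hx
      have hds : w₀.length / N ≤ w₀.length := Nat.div_le_self _ _
      omega

theorem exists_word_inv (w : List S) :
    ∃ w' : List S, (w'.map (epsPerm f inv h₁ h₂)).prod
      = ((w.map (epsPerm f inv h₁ h₂)).prod)⁻¹ := by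
  induction w with
  | nil => exact ⟨[], by simp⟩
  | cons s w ih =>
    obtain ⟨w', hp⟩ := ih
    refine ⟨w' ++ [inv s], ?_⟩
    simp only [List.map_append, List.prod_append, List.map_cons, List.prod_cons,
      List.map_nil, List.prod_nil, mul_one, hp, mul_inv_rev, epsPerm_inv]

theorem exists_word_of_mem {g : Equiv.Perm (List A)}
    (hg : g ∈ Subgroup.closure (Set.range (epsPerm f inv h₁ h₂))) :
    ∃ w : List S, (w.map (epsPerm f inv h₁ h₂)).prod = g := by
  induction hg using Subgroup.closure_induction with
  | mem x hx =>
    obtain ⟨s, rfl⟩ := hx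
    exact ⟨[s], by simp⟩
  | one => exact ⟨[], by simp⟩
  | mul x y hx hy ihx ihy =>
    obtain ⟨w₁, rfl⟩ := ihx
    obtain ⟨w₂, rfl⟩ := ihy
    exact ⟨w₁ ++ w₂, by simp⟩
  | inv x hx ihx =>
    obtain ⟨w, rfl⟩ := ihx
    exact exists_word_inv f inv h₁ h₂ w


end Main

/-- **Lemma 10.**  Let `Φ : A × S → (S ∪ {ε}) × A` be a transducer whose output
at each transition is a single state or the empty word, with `S` closed under
an inversion making the actions of `s` and `s⁻¹` mutually inverse.  If there is
a constant `N` such that every path of length at least `N` in the dual Moore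
diagram of `Φ` whose input label is a reduced word contains an `ε` among its
output labels, then the group `⟨Φ⟩` is contracting; in fact every state `g@a`
of every `g ∈ ⟨Φ⟩` at a single letter `a` satisfies
`|g@a| ≤ (1 − 1/N)·|g| + 1` in the word metric with respect to `S`. -/
theorem contracting_of_eps_on_long_paths [Fintype A] [Fintype S]
    (f : A → S → Option S × A) (inv : S → S) (N : ℕ)
    (h₁ : ∀ (s : S) (w : List A), listActO f (some (inv s)) (listActO f (some s) w) = w)
    (h₂ : ∀ (s : S) (w : List A), listActO f (some s) (listActO f (some (inv s)) w) = w)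
    (hN : ∀ (a : A) (wds : List S), List.Chain' (fun s t => t ≠ inv s) wds →
      N ≤ wds.length → none ∈ pathOut f a wds) :
    -- word length with respect to the generating set `S`
    letI wlen : Equiv.Perm (List A) → ℕ := fun g =>
      sInf {n : ℕ | ∃ w : List S, w.length = n ∧
        (w.map (epsPerm f inv h₁ h₂)).prod = g}
    letI G : Subgroup (Equiv.Perm (List A)) :=
      Subgroup.closure (Set.range (epsPerm f inv h₁ h₂))
    -- `⟨Φ⟩` is contracting …
    (∃ nucleus : Set (Equiv.Perm (List A)), nucleus.Finite ∧
        ∀ g ∈ G, ∃ n : ℕ, ∀ (u : List A) (h : Equiv.Perm (List A)),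
          n ≤ u.length → IsStateL g h u → h ∈ nucleus) ∧
    -- … and in fact `|g@a| ≤ (1 − 1/N)|g| + 1`.
    ∀ g ∈ G, ∀ (a : A) (h : Equiv.Perm (List A)), IsStateL g h [a] →
      (wlen h : ℝ) ≤ (1 - 1 / (N : ℝ)) * (wlen g : ℝ) + 1 := by
  constructor
  · -- contracting
    refine ⟨(fun w : List S => (w.map (epsPerm f inv h₁ h₂)).prod) '' {w | w.length ≤ N - 1},
      Set.Finite.image _ (List.finite_length_le S (N - 1)), ?_⟩
    intro g hg
    obtain ⟨w, rfl⟩ := exists_word_of_mem f inv h₁ h₂ hg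
    refine ⟨w.length, fun u h hu H => ?_⟩
    obtain ⟨w', hp', hl'⟩ := claim_lemma f inv h₁ h₂ N hN u w h H
    exact ⟨w', by simp; omega, hp'⟩
  · -- the bound
    intro g hg a h H
    obtain ⟨w, hwp⟩ := exists_word_of_mem f inv h₁ h₂ hg
    rcases Nat.eq_zero_or_pos N with h0 | hNpos
    · subst h0
      exact absurd (hN a [] List.isChain_nil (Nat.le_refl 0)) (by simp [pathOut])
    have hne : {n : ℕ | ∃ w : List S, w.length = n ∧
        (w.map (epsPerm f inv h₁ h₂)).prod = g}.Nonempty := ⟨w.length, w, rfl, hwp⟩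
    set n := sInf {n : ℕ | ∃ w : List S, w.length = n ∧
        (w.map (epsPerm f inv h₁ h₂)).prod = g} with hn
    obtain ⟨wm, hwml, hwmp⟩ := Nat.sInf_mem hne
    obtain ⟨w₀, hc₀, hl₀, hp₀⟩ := exists_reduced f inv h₁ h₂ wm.length wm le_rfl
    have hp₀' : (w₀.map (epsPerm f inv h₁ h₂)).prod = g := hp₀.trans hwmp
    have hw₀len : w₀.length = n :=
      le_antisymm (hl₀.trans (le_of_eq hwml)) (Nat.sInf_le ⟨w₀, rfl, hp₀'⟩)
    rw [← hp₀'] at H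
    obtain ⟨w₁, hp₁, hl₁⟩ := step_lemma f inv h₁ h₂ N hN hc₀ a H
    have hwh : sInf {k : ℕ | ∃ w : List S, w.length = k ∧
        (w.map (epsPerm f inv h₁ h₂)).prod = h} ≤ w₁.length := Nat.sInf_le ⟨w₁, rfl, hp₁⟩
    have hl₁' : w₁.length ≤ n - n / N := by rw [hw₀len] at hl₁; exact hl₁
    have hwh2 : sInf {k : ℕ | ∃ w : List S, w.length = k ∧
        (w.map (epsPerm f inv h₁ h₂)).prod = h} ≤ n - n / N := le_trans hwh hl₁'
    have hNR : (0 : ℝ) < (N : ℝ) := by exact_mod_cast hNpos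
    have h7 : n ≤ N * (n / N) + N := by
      have hdm := Nat.div_add_mod n N
      have hmlt : n % N < N := Nat.mod_lt _ hNpos
      omega
    have hdivle : (n : ℝ) / (N : ℝ) ≤ ((n / N : ℕ) : ℝ) + 1 := by
      rw [div_le_iff₀ hNR]
      calc (n : ℝ) ≤ (N : ℝ) * ((n / N : ℕ) : ℝ) + (N : ℝ) := by exact_mod_cast h7
        _ = (((n / N : ℕ) : ℝ) + 1) * (N : ℝ) := by ring
    have hqn : n / N ≤ n := Nat.div_le_self _ _
    calc (↑(sInf {k : ℕ | ∃ w : List S, w.length = k ∧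
            (w.map (epsPerm f inv h₁ h₂)).prod = h}) : ℝ)
        ≤ ((n - n / N : ℕ) : ℝ) := by exact_mod_cast hwh2
      _ = (n : ℝ) - ((n / N : ℕ) : ℝ) := by rw [Nat.cast_sub hqn]
      _ ≤ (1 - 1 / (N : ℝ)) * (n : ℝ) + 1 := by
          have hexp : (1 - 1 / (N : ℝ)) * (n : ℝ) + 1 = (n : ℝ) - (n : ℝ) / (N : ℝ) + 1 := by
            ring
          rw [hexp]; linarith


end AutomataPaper
end

section
/- Let Φ : A × S → S × A be a finite state transducer. Set C = A ⊔ S, and let T be the Wang tileset over C consisting of: for each a ∈ A and s ∈ S with Φ(a, s) = (s′, a′), a tile with (N, E, S, W)-colours (s′, a′, s, a); and for each pair (c, d) ∈ C² \ (S × A), a tile with (N, E, S, W)-colours (c, d, c, d). Then T is SE,SW-complete, and for every state s ∈ S the following are equivalent: (i) there exists n ∈ ℕ such that every tiling of the upper half-plane by T with the colour s on every south edge of its bottom row is horizontally n-periodic; (ii) s has finite order in the automata group ⟨Φ⟩. -/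
namespace AutomataPaper

variable {C : Type*}

/-- A Wang tile over the colour set `C`, with colours `(N, E, S, W)`. -/
abbrev WTile (C : Type*) : Type _ := C × C × C × C

def tN (u : WTile C) : C := u.1
def tE (u : WTile C) : C := u.2.1
def tS (u : WTile C) : C := u.2.2.1
def tW (u : WTile C) : C := u.2.2.2

/-- A tileset is `SE`- and `SW`-complete: for every pair of colours there is
exactly one tile with these south and east (resp. south and west) colours. -/
def SESWComplete (T : Set (WTile C)) : Prop :=
  (∀ c d : C, ∃! u : WTile C, u ∈ T ∧ tS u = c ∧ tE u = d) ∧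
  (∀ c d : C, ∃! u : WTile C, u ∈ T ∧ tS u = c ∧ tW u = d)

/-- A valid tiling of the upper half-plane by the tileset `T`. -/
def IsTiling (T : Set (WTile C)) (t : ℤ → ℕ → WTile C) : Prop :=
  ∀ (x : ℤ) (y : ℕ), t x y ∈ T ∧
    tN (t x y) = tS (t x (y + 1)) ∧ tE (t x y) = tW (t (x + 1) y)

/-- The tiling has the colour `c` on every south edge of its bottom row,
i.e. `c^∞` on the horizontal axis. -/
def BottomRow (t : ℤ → ℕ → WTile C) (c : C) : Prop :=
  ∀ x : ℤ, tS (t x 0) = c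

/-- The tiling is horizontally `n`-periodic. -/
def HorizPeriodic (t : ℤ → ℕ → WTile C) (n : ℕ) : Prop :=
  ∀ (x : ℤ) (y : ℕ), t (x + (n : ℤ)) y = t x y

end AutomataPaper

namespace AutomataPaper

variable {A S : Type*}

/-- The Wang tileset associated with a finite state transducer: over the colour
set `C = A ⊔ S`, one tile with `(N, E, S, W)`-colours `(s', a', s, a)` for every
transition `Φ(a, s) = (s', a')`, and one tile `(c, d, c, d)` for every pair
`(c, d) ∈ C² \ (S × A)`. -/
def transducerTiles (f : A → S → S × A) : Set (WTile (A ⊕ S)) :=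
  {u | ∃ (a : A) (s : S),
      u = (Sum.inr (f a s).1, Sum.inl (f a s).2, Sum.inr s, Sum.inl a)} ∪
  {u | ∃ c d : A ⊕ S,
      (¬ ∃ (s : S) (a : A), c = Sum.inr s ∧ d = Sum.inl a) ∧ u = (c, d, c, d)}

/-!
Read the tiles column by column: with the colour `s` at the bottom, the west colours of
column `x + 1` are obtained from those of column `x` by the state `s` of the transducer on
the alphabet `A ⊕ S` that lets letters of `S` pass unchanged, and a column of west colours
determines the whole column of tiles. Hence every such tiling is horizontally `n`-periodic
as soon as `sⁿ` acts trivially; since the letters of `S` only mark positions that are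
skipped, this holds as soon as `sⁿ = 1` on `A^∞`. Conversely, the orbit of any `w ∈ A^∞`
under the powers of `s` is the column sequence of a tiling, so `n`-periodicity of every
tiling forces `sⁿ = 1`.
-/

theorem run_ofFn_succ {B : Type*} (g : B → S → S × B) (q : S) (w : ℕ → B) (y : ℕ) :
    run g q (List.ofFn fun i : Fin (y + 1) => w i)
      = (g (w y) (run g q (List.ofFn fun i : Fin y => w i))).1 := by
  rw [List.ofFn_succ', List.concat_eq_append, run_append]
  rfl

theorem statePerm_pow_eq_one_iff (f : A → S → S × A) (hf : IsFST f) (s : S) (n : ℕ) :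
    statePerm f hf s ^ n = 1 ↔ (seqAct f s)^[n] = id := by
  rw [← DFunLike.coe_fn_eq, Equiv.Perm.coe_pow, Equiv.Perm.coe_one]
  rfl

def sumTransducer (f : A → S → S × A) : A ⊕ S → S → S × (A ⊕ S)
  | Sum.inl a, q => ((f a q).1, Sum.inl (f a q).2)
  | Sum.inr c, q => (q, Sum.inr c)

section FillLeft

variable {B : Type*}

/-- Keep the letters of `B` in `ω` and replace its letters of `A`, in order, by `w`. -/
def fillLeft (ω : ℕ → A ⊕ B) (w : ℕ → A) : ℕ → A ⊕ B := fun y =>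
  (ω y).elim (fun _ => Sum.inl (w (Nat.count (fun i => (ω i).isLeft) y))) Sum.inr

theorem exists_fillLeft_eq [Nonempty A] (ω : ℕ → A ⊕ B) : ∃ w, fillLeft ω w = ω := by
  refine ⟨fun k => (ω (Nat.nth (fun i => (ω i).isLeft) k)).elim id
    fun _ => Classical.arbitrary A, funext fun y => ?_⟩
  cases hy : ω y with
  | inl a =>
    have hleft : (ω y).isLeft := by simp [hy]
    simp [fillLeft, hy, Nat.nth_count (p := fun i => (ω i).isLeft) hleft]
  | inr b => simp [fillLeft, hy]

end FillLeft

theorem run_sumTransducer_fillLeft (f : A → S → S × A) (s : S) (ω : ℕ → A ⊕ S)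
    (w : ℕ → A) (y : ℕ) :
    run (sumTransducer f) s (List.ofFn fun i : Fin y => fillLeft ω w i)
      = run f s (List.ofFn fun i : Fin (Nat.count (fun i => (ω i).isLeft) y) => w i) := by
  induction y with
  | zero => rfl
  | succ y ih =>
    rw [run_ofFn_succ, Nat.count_succ]
    cases hy : ω y with
    | inl a =>
      have hfill : fillLeft ω w y = Sum.inl (w (Nat.count (fun i => (ω i).isLeft) y)) := by
        simp [fillLeft, hy]
      rw [if_pos (by simp), run_ofFn_succ, ← ih, hfill]
      rfl
    | inr b =>
      have hfill : fillLeft ω w y = Sum.inr b := by simp [fillLeft, hy]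
      rw [if_neg (by simp), add_zero, ← ih, hfill]
      rfl

theorem semiconj_fillLeft (f : A → S → S × A) (s : S) (ω : ℕ → A ⊕ S) :
    Function.Semiconj (fillLeft ω) (seqAct f s) (seqAct (sumTransducer f) s) := by
  intro w
  funext y
  simp only [seqAct, run_sumTransducer_fillLeft]
  cases hy : ω y <;> simp [fillLeft, hy, sumTransducer, seqAct]

theorem seqAct_sumTransducer_of_isEmpty [IsEmpty A] (f : A → S → S × A) (s : S) :
    seqAct (sumTransducer f) s = id := by
  funext ω y
  cases hy : ω y with
  | inl a => exact isEmptyElim a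
  | inr b => simp [seqAct, hy, sumTransducer]

theorem iterate_seqAct_sumTransducer_eq_id {f : A → S → S × A} {s : S} {n : ℕ}
    (h : (seqAct f s)^[n] = id) : (seqAct (sumTransducer f) s)^[n] = id := by
  rcases isEmpty_or_nonempty A with hA | hA
  · rw [seqAct_sumTransducer_of_isEmpty, Function.iterate_id]
  · funext ω
    obtain ⟨w, hw⟩ := exists_fillLeft_eq ω
    calc (seqAct (sumTransducer f) s)^[n] ω
        = (seqAct (sumTransducer f) s)^[n] (fillLeft ω w) := by rw [hw]
      _ = fillLeft ω ((seqAct f s)^[n] w) := ((semiconj_fillLeft f s ω).iterate_right n w).symm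
      _ = id ω := by rw [h, id, hw, id]

/-- The unique tile of `transducerTiles f` with south colour `c` and west colour `d`. -/
def transducerTile (f : A → S → S × A) : A ⊕ S → A ⊕ S → WTile (A ⊕ S)
  | Sum.inr q, d => (Sum.inr (sumTransducer f d q).1, (sumTransducer f d q).2, Sum.inr q, d)
  | Sum.inl a, d => (Sum.inl a, d, Sum.inl a, d)

section Tiles

variable {f : A → S → S × A}

@[simp] theorem tS_transducerTile (c d : A ⊕ S) : tS (transducerTile f c d) = c := by
  cases c <;> rfl

@[simp] theorem tW_transducerTile (c d : A ⊕ S) : tW (transducerTile f c d) = d := by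
  cases c <;> rfl

theorem mem_transducerTiles_iff {u : WTile (A ⊕ S)} :
    u ∈ transducerTiles f ↔ u = transducerTile f (tS u) (tW u) := by
  constructor
  · rintro (⟨a, s, rfl⟩ | ⟨c, d, hcd, rfl⟩)
    · rfl
    · rcases c with a | s
      · rfl
      · rcases d with a | s'
        · exact absurd ⟨s, a, rfl, rfl⟩ hcd
        · rfl
  · intro hu
    rw [hu]
    rcases tS u with a | s
    · exact Or.inr ⟨_, _, by simp, rfl⟩
    · rcases tW u with a | s'
      · exact Or.inl ⟨a, s, rfl⟩
      · exact Or.inr ⟨Sum.inr s, Sum.inr s', by simp, rfl⟩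

theorem bijective_tE_transducerTile (hf : IsFST f) (c : A ⊕ S) :
    Function.Bijective fun d => tE (transducerTile f c d) := by
  rcases c with a | q
  · exact Function.bijective_id
  · convert (hf q).sumMap Function.bijective_id using 1
    funext d
    cases d <;> rfl

theorem transducerTiles_seswComplete (hf : IsFST f) : SESWComplete (transducerTiles f) := by
  have of_unique_west : ∀ (c : A ⊕ S) (P : A ⊕ S → Prop), (∃! d, P d) →
      ∃! u, u ∈ transducerTiles f ∧ tS u = c ∧ P (tW u) := by
    rintro c P ⟨d, hd, huniq⟩
    refine ⟨transducerTile f c d,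
      ⟨mem_transducerTiles_iff.2 (by simp), by simp, by simpa⟩, ?_⟩
    rintro u ⟨hu, rfl, hPu⟩
    exact (mem_transducerTiles_iff.1 hu).trans (by rw [huniq _ hPu])
  constructor
  · intro c e
    obtain ⟨u, ⟨hu, hS, hE⟩, huniq⟩ :=
      of_unique_west c (fun d => tE (transducerTile f c d) = e)
        ((bijective_tE_transducerTile hf c).existsUnique e)
    refine ⟨u, ⟨hu, hS, ?_⟩, fun v ⟨hv, hvS, hvE⟩ => huniq v ⟨hv, hvS, ?_⟩⟩
    · rwa [mem_transducerTiles_iff.1 hu, hS]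
    · rwa [mem_transducerTiles_iff.1 hv, hvS] at hvE
  · intro c d
    exact of_unique_west c (· = d) existsUnique_eq

variable {t : ℤ → ℕ → WTile (A ⊕ S)} {s : S}

theorem IsTiling.eq_transducerTile (ht : IsTiling (transducerTiles f) t) (x : ℤ) (y : ℕ) :
    t x y = transducerTile f (tS (t x y)) (tW (t x y)) :=
  mem_transducerTiles_iff.1 (ht x y).1

theorem tS_eq_run (ht : IsTiling (transducerTiles f) t) (hbr : BottomRow t (Sum.inr s))
    (x : ℤ) (y : ℕ) :
    tS (t x y) = Sum.inr (run (sumTransducer f) s (List.ofFn fun i : Fin y => tW (t x i))) := by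
  induction y with
  | zero => exact hbr x
  | succ y ih =>
    have h := congrArg tN (ht.eq_transducerTile x y)
    rw [ih] at h
    rw [← (ht x y).2.1, h, run_ofFn_succ _ _ (fun i => tW (t x i))]
    rfl

theorem tW_add_one (ht : IsTiling (transducerTiles f) t) (hbr : BottomRow t (Sum.inr s))
    (x : ℤ) :
    (fun y => tW (t (x + 1) y)) = seqAct (sumTransducer f) s (fun y => tW (t x y)) := by
  funext y
  have h := congrArg tE (ht.eq_transducerTile x y)
  rw [tS_eq_run ht hbr] at h
  rw [← (ht x y).2.2, h]
  rfl

theorem tW_add_nat (ht : IsTiling (transducerTiles f) t) (hbr : BottomRow t (Sum.inr s))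
    (x : ℤ) (k : ℕ) :
    (fun y => tW (t (x + k) y)) = (seqAct (sumTransducer f) s)^[k] (fun y => tW (t x y)) := by
  induction k with
  | zero => simp
  | succ k ih =>
    rw [Nat.cast_succ, ← add_assoc, tW_add_one ht hbr, ih, Function.iterate_succ_apply']

theorem IsTiling.column_eq_of_tW_eq (ht : IsTiling (transducerTiles f) t)
    (hbr : BottomRow t (Sum.inr s)) {x x' : ℤ}
    (hW : (fun y => tW (t x' y)) = fun y => tW (t x y)) : t x' = t x := by
  funext y
  rw [ht.eq_transducerTile x' y, ht.eq_transducerTile x y, tS_eq_run ht hbr x' y,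
    tS_eq_run ht hbr x y]
  simp only [congrFun hW]

theorem horizPeriodic_of_iterate_eq_id (ht : IsTiling (transducerTiles f) t)
    (hbr : BottomRow t (Sum.inr s)) {n : ℕ} (h : (seqAct (sumTransducer f) s)^[n] = id) :
    HorizPeriodic t n := fun x =>
  congrFun (ht.column_eq_of_tW_eq hbr (by rw [tW_add_nat ht hbr, h, id]))

def orbitTiling (f : A → S → S × A) (s : S) (c : ℤ → ℕ → A) : ℤ → ℕ → WTile (A ⊕ S) :=
  fun x y =>
    transducerTile f (Sum.inr (run f s (List.ofFn fun i : Fin y => c x i))) (Sum.inl (c x y))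

variable {c : ℤ → ℕ → A}

@[simp] theorem tW_orbitTiling (x : ℤ) (y : ℕ) :
    tW (orbitTiling f s c x y) = Sum.inl (c x y) :=
  tW_transducerTile _ _

theorem isTiling_orbitTiling (hc : ∀ x, c (x + 1) = seqAct f s (c x)) :
    IsTiling (transducerTiles f) (orbitTiling f s c) := by
  intro x y
  refine ⟨mem_transducerTiles_iff.2 (by simp [orbitTiling]), ?_, ?_⟩
  · exact congrArg Sum.inr (run_ofFn_succ f s (c x) y).symm
  · rw [tW_orbitTiling, hc]
    rfl

theorem bottomRow_orbitTiling : BottomRow (orbitTiling f s c) (Sum.inr s) := fun _ => by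
  simp [orbitTiling, run]

theorem statePerm_pow_eq_one_of_forall_horizPeriodic (hf : IsFST f) {n : ℕ}
    (h : ∀ t, IsTiling (transducerTiles f) t → BottomRow t (Sum.inr s) → HorizPeriodic t n) :
    statePerm f hf s ^ n = 1 := by
  ext w y
  set c : ℤ → ℕ → A := fun x => (statePerm f hf s ^ x) w
  have hc : ∀ x, c (x + 1) = seqAct f s (c x) := fun x => by
    simp only [c, add_comm x, zpow_one_add, Equiv.Perm.mul_apply]
    rfl
  have hper := congrArg tW (h _ (isTiling_orbitTiling hc) bottomRow_orbitTiling 0 y)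
  simpa [c] using hper

end Tiles

theorem transducer_tiles_periodic_iff_finite_order_general
    (f : A → S → S × A) (hb : IsFST f) :
    SESWComplete (transducerTiles f) ∧
    ∀ s : S,
      ((∃ n : ℕ, 0 < n ∧
          ∀ t : ℤ → ℕ → WTile (A ⊕ S),
            IsTiling (transducerTiles f) t → BottomRow t (Sum.inr s) →
              HorizPeriodic t n)
        ↔ IsOfFinOrder (statePerm f hb s)) := by
  refine ⟨transducerTiles_seswComplete hb, fun s => ?_⟩
  rw [isOfFinOrder_iff_pow_eq_one]
  refine exists_congr fun n => and_congr_right fun _ =>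
    ⟨statePerm_pow_eq_one_of_forall_horizPeriodic hb, fun h t ht hbr => ?_⟩
  exact horizPeriodic_of_iterate_eq_id ht hbr
    (iterate_seqAct_sumTransducer_eq_id ((statePerm_pow_eq_one_iff f hb s n).1 h))

/-- **Transducers and tilings.**  The tileset associated with a finite state
transducer `Φ` is `SE,SW`-complete, and for every state `s` the following are
equivalent: (i) there is an `n` such that every tiling of the upper half-plane
with the colour `s` on the horizontal axis is horizontally `n`-periodic;
(ii) `s` has finite order in the automata group `⟨Φ⟩`. -/
theorem transducer_tiles_periodic_iff_finite_order
    [Fintype A] [Fintype S] (f : A → S → S × A) (hb : IsFST f) :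
    SESWComplete (transducerTiles f) ∧
    ∀ s : S,
      ((∃ n : ℕ, 0 < n ∧
          ∀ t : ℤ → ℕ → WTile (A ⊕ S),
            IsTiling (transducerTiles f) t → BottomRow t (Sum.inr s) →
              HorizPeriodic t n)
        ↔ IsOfFinOrder (statePerm f hb s)) :=
  transducer_tiles_periodic_iff_finite_order_general f hb

end AutomataPaper
end
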